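/- arXiv:2511.11331 — 7 statements merged into one kernel-verified Lean document; each statement's English description precedes it below -/
import Mathlib

section
/- For every nonnegative integer k and every tree T on n vertices, there exists a set W of at most 2^{k+1} - 1 vertices such that every connected component of T \ W has at most n/2^k vertices. -/
/-!
Induction on `k`. If every component of `T \ W` has at most `n / 2^k` vertices, fewer than
`2^(k+1)` of them have more than `n / 2^(k+1)` vertices. Deleting a centroid from each of
these (a vertex whose removal leaves pieces of at most half the size) costs fewer than
`2^(k+1)` vertices and halves the bound. Centroids exist in finite trees by descent: if
deleting `w` leaves a piece `D` with more than half of the vertices, then deleting the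
neighbour `u` of `w` in `D` leaves only pieces smaller than `D`, since acyclicity splits the
tree along the edge `wu` into `D` and its complement.
-/

lemma Finset.card_lt_of_pairwiseDisjoint_of_lt_mul_ncard {α : Type*} [Finite α]
    {𝒞 : Finset (Set α)} (hdisj : (𝒞 : Set (Set α)).PairwiseDisjoint id) {m : ℕ} (hm : 0 < m)
    (hbig : ∀ C ∈ 𝒞, Nat.card α < m * C.ncard) : 𝒞.card < m := by
  rcases 𝒞.eq_empty_or_nonempty with rfl | hne
  · simpa using hm
  have hsum : ∑ C ∈ 𝒞, C.ncard ≤ Nat.card α := by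
    rw [← finsum_mem_coe_finset, ← (𝒞.finite_toSet.ncard_biUnion (fun C _ ↦ C.toFinite) hdisj)]
    exact Set.ncard_le_card _
  have : 𝒞.card * Nat.card α < m * Nat.card α :=
    calc 𝒞.card * Nat.card α = ∑ _ ∈ 𝒞, Nat.card α := by simp
      _ < ∑ C ∈ 𝒞, m * C.ncard := Finset.sum_lt_sum_of_nonempty hne hbig
      _ = m * ∑ C ∈ 𝒞, C.ncard := by rw [Finset.mul_sum]
      _ ≤ m * Nat.card α := Nat.mul_le_mul_left m hsum
  exact Nat.lt_of_mul_lt_mul_right this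

namespace SimpleGraph

variable {V : Type*} {G : SimpleGraph V} {A B C : Set V} {u v w x : V}

/-- The vertex set of the component of `v` in `G.induce A`, as a subset of `V`; empty if
`v ∉ A`. -/
def componentIn (G : SimpleGraph V) (A : Set V) (v : V) : Set V :=
  {x | ∃ p : G.Walk v x, ∀ z ∈ p.support, z ∈ A}

lemma mem_componentIn_self (hv : v ∈ A) : v ∈ G.componentIn A v :=
  ⟨.nil, by simpa using hv⟩

lemma componentIn_subset : G.componentIn A v ⊆ A :=
  fun _ ⟨p, hp⟩ ↦ hp _ p.end_mem_support

lemma mem_of_mem_componentIn (h : x ∈ G.componentIn A v) : v ∈ A :=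
  h.elim fun p hp ↦ hp _ p.start_mem_support

lemma mem_componentIn_comm : x ∈ G.componentIn A v ↔ v ∈ G.componentIn A x := by
  constructor <;> exact fun ⟨p, hp⟩ ↦ ⟨p.reverse, by simpa using hp⟩

lemma mem_componentIn_trans (hx : x ∈ G.componentIn A v) (hw : w ∈ G.componentIn A x) :
    w ∈ G.componentIn A v := by
  obtain ⟨p, hp⟩ := hx
  obtain ⟨q, hq⟩ := hw
  refine ⟨p.append q, fun z hz ↦ ?_⟩
  rcases Walk.mem_support_append_iff p q |>.mp hz with h | h
  exacts [hp z h, hq z h]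

lemma componentIn_eq_of_mem (hx : x ∈ G.componentIn A v) :
    G.componentIn A x = G.componentIn A v := by
  ext z
  exact ⟨mem_componentIn_trans hx, mem_componentIn_trans (mem_componentIn_comm.mp hx)⟩

lemma disjoint_componentIn_of_ne (h : G.componentIn A v ≠ G.componentIn A w) :
    Disjoint (G.componentIn A v) (G.componentIn A w) :=
  Set.disjoint_left.mpr fun _ hv hw ↦
    h ((componentIn_eq_of_mem hv).symm.trans (componentIn_eq_of_mem hw))

lemma componentIn_mono (h : A ⊆ B) : G.componentIn A v ⊆ G.componentIn B v :=
  fun _ ⟨p, hp⟩ ↦ ⟨p, fun z hz ↦ h (hp z hz)⟩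

lemma componentIn_subset_componentIn (h : G.componentIn A v ⊆ B) :
    G.componentIn A v ⊆ G.componentIn B v := by
  classical
  rintro x ⟨p, hp⟩
  exact ⟨p, fun z hz ↦
    h ⟨p.takeUntil z hz, fun y hy ↦ hp y (p.support_takeUntil_subset_support hz hy)⟩⟩

lemma mem_componentIn_componentIn (hx : x ∈ G.componentIn A v) (hw : w ∈ G.componentIn A v) :
    w ∈ G.componentIn (G.componentIn A v) x := by
  rw [← componentIn_eq_of_mem hx] at hw ⊢
  exact componentIn_subset_componentIn subset_rfl hw

lemma exists_isPath_of_mem_componentIn (h : x ∈ G.componentIn A v) :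
    ∃ p : G.Walk v x, p.IsPath ∧ ∀ z ∈ p.support, z ∈ A := by
  classical
  obtain ⟨p, hp⟩ := h
  exact ⟨p.bypass, p.bypass_isPath, fun z hz ↦ hp z (p.support_bypass_subset_support hz)⟩

lemma reachable_induce_iff_mem_componentIn {a b : A} :
    (G.induce A).Reachable a b ↔ (b : V) ∈ G.componentIn A a := by
  constructor
  · rintro ⟨p⟩
    refine ⟨p.map (Embedding.induce A).toHom, fun z hz ↦ ?_⟩
    erw [Walk.support_map, List.mem_map] at hz
    obtain ⟨y, -, rfl⟩ := hz
    exact y.2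
  · rintro ⟨p, hp⟩
    exact ⟨p.induce A hp⟩

lemma image_val_supp_connectedComponentMk_induce (a : A) :
    Subtype.val '' ((G.induce A).connectedComponentMk a).supp = G.componentIn A a := by
  ext x
  constructor
  · rintro ⟨b, hb, rfl⟩
    rw [ConnectedComponent.mem_supp_iff, ConnectedComponent.eq] at hb
    exact reachable_induce_iff_mem_componentIn.mp hb.symm
  · intro hx
    refine ⟨⟨x, componentIn_subset hx⟩, ?_, rfl⟩
    rw [ConnectedComponent.mem_supp_iff, ConnectedComponent.eq]
    exact (reachable_induce_iff_mem_componentIn.mpr hx).symm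

lemma exists_adj_mem_componentIn_sdiff (hx : x ∈ G.componentIn A w) (hxw : x ≠ w) :
    ∃ u, G.Adj w u ∧ x ∈ G.componentIn (A \ {w}) u := by
  obtain ⟨p, hp, hpA⟩ := exists_isPath_of_mem_componentIn hx
  cases p with
  | nil => exact absurd rfl hxw
  | cons hadj q =>
    rw [Walk.cons_isPath_iff] at hp
    refine ⟨_, hadj, q, fun z hz ↦ ⟨hpA z (by simp [hz]), ?_⟩⟩
    rintro rfl
    exact hp.2 hz

lemma componentIn_subset_union_componentIn_sdiff (huw : u ≠ w) :
    G.componentIn A w ⊆ G.componentIn (A \ {w}) u ∪ G.componentIn (A \ {u}) w := by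
  classical
  intro z hz
  obtain ⟨p, hp, hpA⟩ := exists_isPath_of_mem_componentIn (mem_componentIn_comm.mp hz)
  by_cases hu : u ∈ p.support
  · have hw := p.endpoint_notMem_support_takeUntil hp hu huw.symm
    refine .inl (mem_componentIn_comm.mp ⟨p.takeUntil u hu, fun y hy ↦ ⟨?_, ?_⟩⟩)
    · exact hpA y (p.support_takeUntil_subset_support hu hy)
    · rintro rfl; exact hw hy
  · refine .inr (mem_componentIn_comm.mpr ⟨p, fun y hy ↦ ⟨hpA y hy, ?_⟩⟩)
    rintro rfl; exact hu hy

namespace IsAcyclic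

lemma disjoint_componentIn_sdiff (hG : G.IsAcyclic) (hadj : G.Adj w u) :
    Disjoint (G.componentIn (A \ {w}) u) (G.componentIn (A \ {u}) w) := by
  refine Set.disjoint_left.mpr fun z hzu hzw ↦ ?_
  obtain ⟨p, hp, hpA⟩ := exists_isPath_of_mem_componentIn hzu
  obtain ⟨q, hq, hqA⟩ := exists_isPath_of_mem_componentIn hzw
  have hwp : w ∉ p.support := fun h ↦ (hpA w h).2 rfl
  have hpq : Walk.cons hadj p = q :=
    congrArg Subtype.val ((hG.subsingleton_path w z).elim ⟨_, hp.cons hwp⟩ ⟨q, hq⟩)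
  exact (hqA u (hpq ▸ by simp)).2 rfl

lemma ncard_componentIn_sdiff_lt (hG : G.IsAcyclic) (hfin : C.Finite)
    (hC : ∀ a ∈ C, ∀ b ∈ C, b ∈ G.componentIn C a) (hw : w ∈ C) (hu : u ∈ C)
    (hadj : G.Adj w u) (hbig : C.ncard < 2 * (G.componentIn (C \ {w}) u).ncard) (x : V) :
    (G.componentIn (C \ {u}) x).ncard < (G.componentIn (C \ {w}) u).ncard := by
  set D := G.componentIn (C \ {w}) u
  set D' := G.componentIn (C \ {u}) w
  have hDC : D ⊆ C := componentIn_subset.trans Set.sdiff_subset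
  have hcover : C ⊆ D ∪ D' := fun z hz ↦
    componentIn_subset_union_componentIn_sdiff hadj.ne.symm (hC w hw z hz)
  have hfD : D.Finite := hfin.subset hDC
  have hdisj : Disjoint D D' := hG.disjoint_componentIn_sdiff hadj
  by_cases hwx : w ∈ G.componentIn (C \ {u}) x
  · have hD' : D' ⊆ C \ D := fun z hz ↦
      ⟨(componentIn_subset hz).1, fun hzD ↦ Set.disjoint_left.mp hdisj hzD hz⟩
    rw [← componentIn_eq_of_mem hwx]
    calc D'.ncard ≤ (C \ D).ncard := Set.ncard_le_ncard hD' hfin.sdiff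
      _ = C.ncard - D.ncard := Set.ncard_sdiff hDC hfD
      _ < D.ncard := by omega
  · have hsub : G.componentIn (C \ {u}) x ⊆ D \ {u} := by
      intro z hz
      have hzD' : z ∉ D' := fun hzD' ↦
        hwx (componentIn_eq_of_mem hz ▸ mem_componentIn_comm.mp hzD')
      obtain ⟨hzC, hzu⟩ := componentIn_subset hz
      exact ⟨(hcover hzC).resolve_right hzD', hzu⟩
    have huD : u ∈ D := mem_componentIn_self ⟨hu, hadj.ne.symm⟩
    calc (G.componentIn (C \ {u}) x).ncard ≤ (D \ {u}).ncard :=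
          Set.ncard_le_ncard hsub hfD.sdiff
      _ < D.ncard := Set.ncard_sdiff_singleton_lt_of_mem huD hfD

theorem exists_centroid (hG : G.IsAcyclic) (hfin : C.Finite) (hne : C.Nonempty)
    (hC : ∀ a ∈ C, ∀ b ∈ C, b ∈ G.componentIn C a) :
    ∃ w ∈ C, ∀ x, 2 * (G.componentIn (C \ {w}) x).ncard ≤ C.ncard := by
  by_contra! h
  suffices ∀ n, ∀ w ∈ C, ∀ x, (G.componentIn (C \ {w}) x).ncard = n →
      C.ncard < 2 * n → False by
    obtain ⟨w, hw⟩ := hne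
    obtain ⟨x, hx⟩ := h w hw
    exact this _ w hw x rfl hx
  intro n
  induction n using Nat.strong_induction_on with | _ n ih => ?_
  rintro w hw x rfl hbig
  obtain ⟨y, hy⟩ := Set.nonempty_of_ncard_ne_zero
    (by omega : (G.componentIn (C \ {w}) x).ncard ≠ 0)
  obtain ⟨hxC, hxw⟩ := mem_of_mem_componentIn hy
  obtain ⟨u, hadj, hxu⟩ := exists_adj_mem_componentIn_sdiff (hC w hw x hxC) hxw
  obtain ⟨huC, -⟩ := mem_of_mem_componentIn hxu
  rw [componentIn_eq_of_mem hxu] at hbig ih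
  obtain ⟨x', hx'⟩ := h u huC
  exact ih _ (hG.ncard_componentIn_sdiff_lt hfin hC hw huC hadj hbig x') u huC x' rfl hx'

theorem exists_finset_halving [Fintype V] (hG : G.IsAcyclic) (S : Set V) {m : ℕ} (hm : 0 < m)
    (hS : ∀ v, m * (G.componentIn S v).ncard ≤ Fintype.card V) :
    ∃ Z : Finset V, Z.card < 2 * m ∧
      ∀ v, 2 * m * (G.componentIn (S \ Z) v).ncard ≤ Fintype.card V := by
  classical
  set 𝒞 := (Finset.univ.image (G.componentIn S)).filter
    fun C ↦ Fintype.card V < 2 * m * C.ncard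
  have hcard : 𝒞.card < 2 * m := by
    refine Finset.card_lt_of_pairwiseDisjoint_of_lt_mul_ncard ?_ (by omega) fun C hC ↦ ?_
    · intro C hC D hD hCD
      obtain ⟨⟨v, rfl⟩, -⟩ := by simpa [𝒞] using hC
      obtain ⟨⟨w, rfl⟩, -⟩ := by simpa [𝒞] using hD
      exact disjoint_componentIn_of_ne hCD
    · simpa [Nat.card_eq_fintype_card] using (Finset.mem_filter.mp hC).2
  have hcentroid : ∀ C ∈ 𝒞, ∃ w, ∀ x, 2 * (G.componentIn (C \ {w}) x).ncard ≤ C.ncard := by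
    intro C hC
    obtain ⟨⟨v, rfl⟩, hbig⟩ := by simpa [𝒞] using hC
    obtain ⟨w, -, hw⟩ := hG.exists_centroid (Set.toFinite _)
      (Set.nonempty_of_ncard_ne_zero fun h ↦ by rw [h] at hbig; omega)
      fun a ha b hb ↦ mem_componentIn_componentIn ha hb
    exact ⟨w, hw⟩
  choose c hc using hcentroid
  set Z := 𝒞.attach.image fun C ↦ c C.1 C.2
  refine ⟨Z, Finset.card_image_le.trans_lt (by rwa [Finset.card_attach]), fun v ↦ ?_⟩
  set C := G.componentIn S v
  have hsub : G.componentIn (S \ Z) v ⊆ C := componentIn_mono Set.sdiff_subset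
  by_cases hC : C ∈ 𝒞
  · have hcZ : c C hC ∈ Z :=
      Finset.mem_image_of_mem _ (Finset.mem_attach _ ⟨C, hC⟩)
    have hsub' : G.componentIn (S \ Z) v ⊆ G.componentIn (C \ {c C hC}) v :=
      componentIn_subset_componentIn fun z hz ↦
        ⟨hsub hz, fun hzc ↦ (componentIn_subset hz).2 (Set.mem_singleton_iff.mp hzc ▸ hcZ)⟩
    calc 2 * m * (G.componentIn (S \ Z) v).ncard
        ≤ m * (2 * (G.componentIn (C \ {c C hC}) v).ncard) := by
          rw [mul_comm 2 m, mul_assoc]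
          gcongr
          exact Set.toFinite _
      _ ≤ m * C.ncard := Nat.mul_le_mul_left m (hc C hC v)
      _ ≤ Fintype.card V := hS v
  · have : 2 * m * C.ncard ≤ Fintype.card V := by simpa [𝒞, C] using hC
    exact (Nat.mul_le_mul_left _ (Set.ncard_le_ncard hsub (Set.toFinite _))).trans this

theorem exists_separator [Fintype V] (hG : G.IsAcyclic) (k : ℕ) :
    ∃ W : Finset V, W.card ≤ 2 ^ (k + 1) - 1 ∧
      ∀ v, 2 ^ k * (G.componentIn {u | u ∉ W} v).ncard ≤ Fintype.card V := by
  classical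
  induction k with
  | zero =>
    refine ⟨∅, by simp, fun v ↦ ?_⟩
    simpa [Nat.card_eq_fintype_card] using Set.ncard_le_card (G.componentIn _ v)
  | succ k ih =>
    obtain ⟨W, hWcard, hW⟩ := ih
    obtain ⟨Z, hZcard, hZ⟩ := hG.exists_finset_halving _ (by positivity) hW
    refine ⟨W ∪ Z, ?_, fun v ↦ ?_⟩
    · have := Finset.card_union_le W Z
      have := pow_succ 2 (k + 1)
      have := pow_succ 2 k
      omega
    · have hWZ : {u | u ∉ W ∪ Z} = {u | u ∉ W} \ Z := by ext; simp
      rw [hWZ, pow_succ, mul_comm _ 2]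
      exact hZ v

end IsAcyclic

end SimpleGraph

theorem stmt_2 {V : Type*} [Fintype V] (G : SimpleGraph V) (hT : G.IsTree) (k : ℕ) :
    ∃ W : Finset V, W.card ≤ 2 ^ (k + 1) - 1 ∧
      ∀ c : (G.induce {u : V | u ∉ W}).ConnectedComponent,
        2 ^ k * c.supp.ncard ≤ Fintype.card V := by
  obtain ⟨W, hWcard, hW⟩ := hT.isAcyclic.exists_separator k
  refine ⟨W, hWcard, fun c ↦ ?_⟩
  induction c using SimpleGraph.ConnectedComponent.ind with | h v => ?_
  rw [← Set.ncard_image_of_injective _ Subtype.val_injective,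
    SimpleGraph.image_val_supp_connectedComponentMk_induce]
  exact hW v
end

section
/- Let T be a tree and S ⊆ V(T). Then there is a set W ⊆ V(T) \ S with |W| ≤ 6|S| such that for every connected component C of T \ (S ∪ W), there is at most one edge of T between V(C) and S. -/
open SimpleGraph

namespace Stmt4Aux

variable {V : Type*} (G : SimpleGraph V)

lemma dist_le_length_of_mem_support {u v x : V} (p : G.Walk u v) (hx : x ∈ p.support) :
    G.dist u x ≤ p.length := by
  classical
  calc G.dist u x ≤ (p.takeUntil x hx).length := SimpleGraph.dist_le _
    _ ≤ p.length := Walk.length_takeUntil_le p hx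

lemma dist_lt_length_of_mem_support {u v x : V} (p : G.Walk u v) (hx : x ∈ p.support)
    (hne : x ≠ v) : G.dist u x < p.length := by
  classical
  have hsp := p.take_spec hx
  have hlen : (p.takeUntil x hx).length + (p.dropUntil x hx).length = p.length := by
    rw [← Walk.length_append, hsp]
  have h0 : (p.dropUntil x hx).length ≠ 0 := fun h => hne (Walk.eq_of_length_eq_zero h)
  have h1 : G.dist u x ≤ (p.takeUntil x hx).length := SimpleGraph.dist_le _
  omega

/-- In a tree, the distances to the root of two adjacent vertices differ by exactly one. -/
lemma adj_cases (hc : G.Connected) (ha : G.IsAcyclic) (r : V) {d e : V} (h : G.Adj d e) :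
    G.dist r e = G.dist r d + 1 ∨ G.dist r d = G.dist r e + 1 := by
  have hde : G.dist d e ≤ 1 := by
    have := SimpleGraph.dist_le (Walk.cons h Walk.nil)
    simpa using this
  have hed : G.dist e d ≤ 1 := by rw [dist_comm]; exact hde
  have h1 : G.dist r e ≤ G.dist r d + G.dist d e := hc.dist_triangle
  have h2 : G.dist r d ≤ G.dist r e + G.dist e d := hc.dist_triangle
  have h3 : G.dist r d ≠ G.dist r e := by
    intro heq
    obtain ⟨P, hP, hPl⟩ := (hc r d).exists_path_of_dist
    obtain ⟨Q, hQ, hQl⟩ := (hc r e).exists_path_of_dist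
    have hdQ : d ∉ Q.support := by
      intro hmem
      have := dist_lt_length_of_mem_support G Q hmem h.ne
      omega
    have hp2 : (Walk.cons h Q.reverse).IsPath := by
      rw [Walk.cons_isPath_iff]
      exact ⟨hQ.reverse, by simpa [Walk.support_reverse] using hdQ⟩
    have hp1 : P.reverse.IsPath := hP.reverse
    have hEq : (⟨P.reverse, hp1⟩ : G.Path d r) = ⟨Walk.cons h Q.reverse, hp2⟩ :=
      ha.path_unique _ _
    have hlen : P.reverse.length = (Walk.cons h Q.reverse).length := by
      rw [Subtype.ext_iff] at hEq
      exact congrArg Walk.length hEq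
    rw [Walk.length_reverse, Walk.length_cons, Walk.length_reverse] at hlen
    omega
  omega

/-- In a tree, a vertex has a unique neighbour closer to the root. -/
lemma low_unique (hc : G.Connected) (ha : G.IsAcyclic) (r : V) {d e₁ e₂ : V}
    (h1 : G.Adj d e₁) (h2 : G.Adj d e₂)
    (k1 : G.dist r e₁ + 1 = G.dist r d) (k2 : G.dist r e₂ + 1 = G.dist r d) : e₁ = e₂ := by
  obtain ⟨Q1, hQ1, l1⟩ := (hc r e₁).exists_path_of_dist
  obtain ⟨Q2, hQ2, l2⟩ := (hc r e₂).exists_path_of_dist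
  have hd1 : d ∉ Q1.support := by
    intro hm
    have := dist_le_length_of_mem_support G Q1 hm
    omega
  have hd2 : d ∉ Q2.support := by
    intro hm
    have := dist_le_length_of_mem_support G Q2 hm
    omega
  have hp1 : (Walk.cons h1 Q1.reverse).IsPath := by
    rw [Walk.cons_isPath_iff]
    exact ⟨hQ1.reverse, by simpa [Walk.support_reverse] using hd1⟩
  have hp2 : (Walk.cons h2 Q2.reverse).IsPath := by
    rw [Walk.cons_isPath_iff]
    exact ⟨hQ2.reverse, by simpa [Walk.support_reverse] using hd2⟩
  have hEq : (⟨Walk.cons h1 Q1.reverse, hp1⟩ : G.Path d r) = ⟨Walk.cons h2 Q2.reverse, hp2⟩ :=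
    ha.path_unique _ _
  have hsup : (Walk.cons h1 Q1.reverse).support = (Walk.cons h2 Q2.reverse).support := by
    rw [Subtype.ext_iff] at hEq
    exact congrArg Walk.support hEq
  rw [Walk.support_cons, Walk.support_cons, Q1.reverse.support_eq_cons,
    Q2.reverse.support_eq_cons] at hsup
  simp only [List.cons.injEq] at hsup
  exact hsup.2.1

/-- Second-to-last vertex of a shortest walk. -/
lemma exists_penult (hc : G.Connected) {u v : V} {n : ℕ} (h : G.dist u v = n + 1) :
    ∃ f, G.Adj f v ∧ G.dist u f = n := by
  obtain ⟨p, hp, hl⟩ := (hc u v).exists_path_of_dist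
  have hw : ∃ w : G.Walk v u, w.length = n + 1 := ⟨p.reverse, by rw [Walk.length_reverse]; omega⟩
  obtain ⟨w, hwl⟩ := hw
  cases w with
  | nil => simp at hwl
  | @cons _ f _ hadj q =>
    refine ⟨f, hadj.symm, ?_⟩
    rw [Walk.length_cons] at hwl
    have h1 : G.dist u f ≤ n := by
      rw [dist_comm]
      have := SimpleGraph.dist_le q
      omega
    have h2 : G.dist u v ≤ G.dist u f + G.dist f v := hc.dist_triangle
    have h3 : G.dist f v ≤ 1 := by
      have := SimpleGraph.dist_le (Walk.cons hadj.symm Walk.nil)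
      simpa using this
    omega

lemma desc_step (hc : G.Connected) (ha : G.IsAcyclic) (r : V) (S : Finset V) {a d e : V}
    (hpar : ∃ y ∈ S, G.Adj a y ∧ G.dist r a = G.dist r y + 1)
    (hd : G.dist r d = G.dist r a + G.dist a d)
    (hadj : G.Adj d e) (heS : e ∉ S) :
    G.dist r e = G.dist r a + G.dist a e := by
  obtain ⟨y, hyS, hay, hry⟩ := hpar
  rcases adj_cases G hc ha r hadj with hup | hdown
  · have t1 : G.dist a e ≤ G.dist a d + G.dist d e := hc.dist_triangle
    have t2 : G.dist r e ≤ G.dist r a + G.dist a e := hc.dist_triangle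
    have t3 : G.dist d e ≤ 1 := by
      have := SimpleGraph.dist_le (Walk.cons hadj Walk.nil)
      simpa using this
    omega
  · by_cases hda : d = a
    · subst hda
      have : e = y := by
        refine low_unique G hc ha r hadj hay ?_ ?_ <;> omega
      exact absurd (this ▸ hyS) heS
    · have hpos : 0 < G.dist a d := hc.pos_dist_of_ne (fun hh => hda hh.symm)
      obtain ⟨n, hn⟩ : ∃ n, G.dist a d = n + 1 := ⟨G.dist a d - 1, by omega⟩
      obtain ⟨f, hfadj, hfd⟩ := exists_penult G hc hn
      have hDf_le : G.dist r f ≤ G.dist r a + G.dist a f := hc.dist_triangle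
      have hfd1 : G.dist f d ≤ 1 := by
        have := SimpleGraph.dist_le (Walk.cons hfadj Walk.nil)
        simpa using this
      have hDf_ge : G.dist r d ≤ G.dist r f + G.dist f d := hc.dist_triangle
      have hfe : f = e := by
        refine low_unique G hc ha r hfadj.symm hadj ?_ ?_ <;> omega
      rw [hfe] at hfd
      omega

lemma desc_walk (hc : G.Connected) (ha : G.IsAcyclic) (r : V) (S : Finset V)
    {a b : {u : V | u ∉ S}} (w : (G.induce {u : V | u ∉ S}).Walk b a)
    (hpar : ∃ y ∈ S, G.Adj a.1 y ∧ G.dist r a.1 = G.dist r y + 1) :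
    G.dist r b.1 = G.dist r a.1 + G.dist (a : V) b.1 := by
  induction w with
  | nil => simp
  | @cons b c _ hadj p ih =>
    have hc' := ih hpar
    have hadj' : G.Adj (c : V) (b : V) := hadj.symm
    exact desc_step G hc ha r S ⟨_, hpar.choose_spec.1, hpar.choose_spec.2.1,
      hpar.choose_spec.2.2⟩ hc' hadj' b.2

lemma up_unique (hc : G.Connected) (ha : G.IsAcyclic) (r : V) (S : Finset V)
    {x₁ x₂ : {u : V | u ∉ S}}
    (hr : (G.induce {u : V | u ∉ S}).Reachable x₁ x₂)
    (h1 : ∃ y ∈ S, G.Adj x₁.1 y ∧ G.dist r x₁.1 = G.dist r y + 1)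
    (h2 : ∃ y ∈ S, G.Adj x₂.1 y ∧ G.dist r x₂.1 = G.dist r y + 1) :
    x₁ = x₂ := by
  obtain ⟨w⟩ := hr
  have e1 := desc_walk G hc ha r S w.reverse h1
  have e2 := desc_walk G hc ha r S w h2
  have hcomm : G.dist (x₁ : V) x₂.1 = G.dist (x₂ : V) x₁.1 := dist_comm
  have hz : G.dist (x₁ : V) x₂.1 = 0 := by omega
  have : (x₁ : V) = x₂.1 := hc.dist_eq_zero_iff.mp (by rw [hcomm] at hz; exact hcomm ▸ hz)
  exact Subtype.ext this

end Stmt4Aux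

open Stmt4Aux
theorem stmt_4 {V : Type*} [Fintype V] (G : SimpleGraph V) (hT : G.IsTree) (S : Finset V) :
    ∃ W : Finset V, Disjoint W S ∧ W.card ≤ 6 * S.card ∧
      ∀ c : (G.induce {u : V | u ∉ S ∧ u ∉ W}).ConnectedComponent,
        ∀ (x x' : {u : V | u ∉ S ∧ u ∉ W}) (y y' : V),
          x ∈ c.supp → x' ∈ c.supp → y ∈ S → y' ∈ S →
          G.Adj ↑x y → G.Adj ↑x' y' → (x : V) = ↑x' ∧ y = y' := by
  classical
  rcases isEmpty_or_nonempty V with hemp | hne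
  · refine ⟨∅, by simp, by simp, ?_⟩
    intro c x x' y y' _ _ _ _ _ _
    exact (hemp.false (x : V)).elim
  · obtain ⟨r⟩ := hne
    have hc : G.Connected := hT.isConnected
    have ha : G.IsAcyclic := hT.IsAcyclic
    set A : Set V := {u : V | u ∉ S} with hA
    set H : SimpleGraph A := G.induce A with hH
    -- A vertex is "bad" if its component in `G.induce A` has two distinct edges to `S`.
    set Bad : V → Prop := fun v => ∃ (hv : v ∉ S) (x x' : A) (y y' : V), y ∈ S ∧ y' ∈ S ∧
      H.Reachable ⟨v, hv⟩ x ∧ H.Reachable ⟨v, hv⟩ x' ∧ G.Adj x.1 y ∧ G.Adj x'.1 y' ∧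
      ¬((x : V) = x'.1 ∧ y = y') with hBad
    set W : Finset V := Finset.univ.filter (fun v => (∃ y ∈ S, G.Adj v y) ∧ Bad v) with hW
    have hWS : ∀ v ∈ W, v ∉ S := by
      intro v hv
      have := (Finset.mem_filter.mp hv).2.2
      exact this.choose
    refine ⟨W, ?_, ?_, ?_⟩
    · rw [Finset.disjoint_left]
      intro a ha hs
      exact hWS a ha hs
    · -- cardinality bound
      set Wd : Finset V := Finset.univ.filter
        (fun v => ∃ y ∈ S, G.Adj v y ∧ G.dist r y = G.dist r v + 1) with hWd
      set Wu : Finset V := Finset.univ.filter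
        (fun v => Bad v ∧ ∃ y ∈ S, G.Adj v y ∧ G.dist r v = G.dist r y + 1) with hWu
      have hcover : W ⊆ Wd ∪ Wu := by
        intro v hv
        obtain ⟨-, ⟨y, hyS, hadj⟩, hbad⟩ := Finset.mem_filter.mp hv
        rcases adj_cases G hc ha r hadj with h1 | h1
        · exact Finset.mem_union_left _ (Finset.mem_filter.mpr
            ⟨Finset.mem_univ _, y, hyS, hadj, h1⟩)
        · exact Finset.mem_union_right _ (Finset.mem_filter.mpr
            ⟨Finset.mem_univ _, hbad, y, hyS, hadj, h1⟩)
      have hWdcard : Wd.card ≤ S.card := by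
        set f : V → V := fun v => if h : ∃ y, y ∈ S ∧ G.Adj v y ∧ G.dist r y = G.dist r v + 1
          then h.choose else r with hf
        apply Finset.card_le_card_of_injOn f
        · intro v hv
          obtain ⟨-, hex⟩ := Finset.mem_filter.mp hv
          rw [hf]
          simp only [dif_pos hex]
          exact hex.choose_spec.1
        · intro v₁ hv₁ v₂ hv₂ heq
          obtain ⟨-, hex₁⟩ := Finset.mem_filter.mp hv₁
          obtain ⟨-, hex₂⟩ := Finset.mem_filter.mp hv₂
          rw [hf] at heq
          simp only [dif_pos hex₁, dif_pos hex₂] at heq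
          obtain ⟨-, hadj₁, hd₁⟩ := hex₁.choose_spec
          obtain ⟨-, hadj₂, hd₂⟩ := hex₂.choose_spec
          rw [heq] at hadj₁ hd₁
          exact low_unique G hc ha r hadj₁.symm hadj₂.symm (by omega) (by omega)
      have hWucard : Wu.card ≤ S.card := by
        set R : V → Prop := fun v => ∃ y, y ∈ S ∧ ∃ (hv : v ∉ S) (x : A),
          H.Reachable ⟨v, hv⟩ x ∧ G.Adj x.1 y ∧ G.dist r y = G.dist r x.1 + 1 with hR
        have hRall : ∀ v ∈ Wu, R v := by
          intro v hv
          obtain ⟨-, hbad, y, hyS, hadj, hup⟩ := Finset.mem_filter.mp hv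
          obtain ⟨hvS, x, x', z, z', hzS, hz'S, hrx, hrx', hax, hax', hneq⟩ := hbad
          rcases adj_cases G hc ha r hax with h1 | h1
          · exact ⟨z, hzS, hvS, x, hrx, hax, h1⟩
          · rcases adj_cases G hc ha r hax' with h2 | h2
            · exact ⟨z', hz'S, hvS, x', hrx', hax', h2⟩
            · exfalso
              have hx12 : x = x' := up_unique G hc ha r S (hrx.symm.trans hrx')
                ⟨z, hzS, hax, h1⟩ ⟨z', hz'S, hax', h2⟩
              subst hx12
              have hz12 : z = z' :=
                low_unique G hc ha r hax hax' (by omega) (by omega)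
              exact hneq ⟨rfl, hz12⟩
        set f : V → V := fun v => if h : R v then h.choose else r with hf
        apply Finset.card_le_card_of_injOn f
        · intro v hv
          have hex := hRall v hv
          rw [hf]
          simp only [dif_pos hex]
          exact hex.choose_spec.1
        · intro v₁ hv₁ v₂ hv₂ heq
          have hex₁ := hRall v₁ hv₁
          have hex₂ := hRall v₂ hv₂
          rw [hf] at heq
          simp only [dif_pos hex₁, dif_pos hex₂] at heq
          obtain ⟨hyS₁, hv₁S, x₁, hre₁, hadj₁, hd₁⟩ := hex₁.choose_spec
          obtain ⟨hyS₂, hv₂S, x₂, hre₂, hadj₂, hd₂⟩ := hex₂.choose_spec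
          rw [heq] at hadj₁ hd₁
          have hx12 : (x₁ : V) = x₂.1 :=
            low_unique G hc ha r hadj₁.symm hadj₂.symm (by omega) (by omega)
          have hx12' : x₁ = x₂ := Subtype.ext hx12
          subst hx12'
          have hreach : H.Reachable ⟨v₁, hv₁S⟩ ⟨v₂, hv₂S⟩ := hre₁.trans hre₂.symm
          obtain ⟨-, -, y₁, hy₁S, ha₁, hu₁⟩ := Finset.mem_filter.mp hv₁
          obtain ⟨-, -, y₂, hy₂S, ha₂, hu₂⟩ := Finset.mem_filter.mp hv₂
          have := up_unique G hc ha r S hreach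
            ⟨y₁, hy₁S, ha₁, hu₁⟩ ⟨y₂, hy₂S, ha₂, hu₂⟩
          exact congrArg Subtype.val this
      calc W.card ≤ (Wd ∪ Wu).card := Finset.card_le_card hcover
        _ ≤ Wd.card + Wu.card := Finset.card_union_le _ _
        _ ≤ 6 * S.card := by omega
    · -- main property
      intro c x x' y y' hx hx' hyS hy'S hadj hadj'
      by_contra hcon
      have h1 := (ConnectedComponent.mem_supp_iff c x).mp hx
      have h2 := (ConnectedComponent.mem_supp_iff c x').mp hx'
      have hreach : (G.induce {u : V | u ∉ S ∧ u ∉ W}).Reachable x x' :=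
        ConnectedComponent.exact (h1.trans h2.symm)
      have hmaps : Set.MapsTo id {u : V | u ∉ S ∧ u ∉ W} A := fun u hu => hu.1
      have hreach2 : H.Reachable ⟨x.1, x.2.1⟩ ⟨x'.1, x'.2.1⟩ := by
        have := hreach.map (induceHom (Hom.id : G →g G) hmaps)
        exact this
      have hxW : (x : V) ∈ W := by
        refine Finset.mem_filter.mpr ⟨Finset.mem_univ _, ⟨y, hyS, hadj⟩, ?_⟩
        exact ⟨x.2.1, ⟨x.1, x.2.1⟩, ⟨x'.1, x'.2.1⟩, y, y', hyS, hy'S,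
          Reachable.refl _, hreach2, hadj, hadj', hcon⟩
      exact x.2.2 hxW
end

section
/- Let i, j, ℓ, n be natural numbers with ℓ odd, i < j, and (j+1)ℓ ≤ n. Consider the intervals I_i = {iℓ+1, ..., (i+1)ℓ} and I_j = {jℓ+1, ..., (j+1)ℓ}. Then there exists a perfect matching M between I_i and I_j (i.e., a bijection f : I_i → I_j) such that the differences f(x) - x for x ∈ I_i are pairwise distinct and all lie in the interval {(j-i)ℓ - ⌊ℓ/2⌋, ..., (j-i)ℓ + ⌊ℓ/2⌋}. -/
theorem stmt_6 (i j ℓ n : ℕ) (hodd : Odd ℓ) (hij : i < j) (hn : (j + 1) * ℓ ≤ n) :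
    ∃ f : ℕ → ℕ,
      Set.BijOn f (Set.Icc (i * ℓ + 1) ((i + 1) * ℓ)) (Set.Icc (j * ℓ + 1) ((j + 1) * ℓ)) ∧
      Set.InjOn (fun x => f x - x) (Set.Icc (i * ℓ + 1) ((i + 1) * ℓ)) ∧
      ∀ x ∈ Set.Icc (i * ℓ + 1) ((i + 1) * ℓ),
        f x - x ∈ Set.Icc ((j - i) * ℓ - ℓ / 2) ((j - i) * ℓ + ℓ / 2) := by
  obtain ⟨m, hm⟩ := hodd
  have h1 : (i + 1) * ℓ = i * ℓ + ℓ := by ring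
  have h2 : (j + 1) * ℓ = j * ℓ + ℓ := by ring
  have h3 : (j - i) * ℓ = j * ℓ - i * ℓ := Nat.sub_mul j i ℓ
  have h4 : i * ℓ + ℓ ≤ j * ℓ := by
    calc i * ℓ + ℓ = (i + 1) * ℓ := by ring
    _ ≤ j * ℓ := Nat.mul_le_mul_right ℓ hij
  rw [h1, h2, h3]
  set A := i * ℓ with hA
  set B := j * ℓ with hB
  refine ⟨fun x => if x ≤ A + ℓ / 2 then B + 2 * (x - A) else B + 2 * (x - A) - ℓ,
    ⟨?_, ?_, ?_⟩, ?_, ?_⟩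
  · intro x hx
    simp only [Set.mem_Icc] at *
    split <;> omega
  · intro x hx y hy hxy
    simp only [Set.mem_Icc] at *
    split at hxy <;> split at hxy <;> omega
  · intro y hy
    simp only [Set.mem_Icc, Set.mem_image] at *
    rcases Nat.even_or_odd (y - B) with ⟨s, hs⟩ | ⟨s, hs⟩
    · refine ⟨A + s, ?_, ?_⟩
      · omega
      · split <;> omega
    · refine ⟨A + s + m + 1, ?_, ?_⟩
      · omega
      · split <;> omega
  · intro x hx y hy hxy
    simp only [Set.mem_Icc] at hx hy
    simp only at hxy
    split at hxy <;> split at hxy <;> omega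
  · intro x hx
    simp only [Set.mem_Icc] at *
    split <;> omega
end

section
/- Let ℓ be an odd positive integer and i < j naturals. Define f on {iℓ+1,...,(i+1)ℓ} by: for y ∈ {1,...,⌈ℓ/2⌉}, f(iℓ + y) = jℓ + ⌈ℓ/2⌉ + 1 - y, and for z ∈ {1,...,⌊ℓ/2⌋}, f(iℓ + ⌈ℓ/2⌉ + z) = (j+1)ℓ + 1 - z. Then f is a bijection from {iℓ+1,...,(i+1)ℓ} onto {jℓ+1,...,(j+1)ℓ}, and the set of values {f(x) - x} equals exactly {(j-i)ℓ - ⌊ℓ/2⌋, ..., (j-i)ℓ + ⌊ℓ/2⌋} (a set of ℓ distinct values). -/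
theorem stmt_7 (i j ℓ : ℕ) (hodd : Odd ℓ) (hpos : 0 < ℓ) (hij : i < j) (f : ℕ → ℕ)
    (h1 : ∀ y ∈ Set.Icc 1 ((ℓ + 1) / 2), f (i * ℓ + y) = j * ℓ + (ℓ + 1) / 2 + 1 - y)
    (h2 : ∀ z ∈ Set.Icc 1 (ℓ / 2), f (i * ℓ + (ℓ + 1) / 2 + z) = (j + 1) * ℓ + 1 - z) :
    Set.BijOn f (Set.Icc (i * ℓ + 1) ((i + 1) * ℓ)) (Set.Icc (j * ℓ + 1) ((j + 1) * ℓ)) ∧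
    (fun x => f x - x) '' Set.Icc (i * ℓ + 1) ((i + 1) * ℓ)
      = Set.Icc ((j - i) * ℓ - ℓ / 2) ((j - i) * ℓ + ℓ / 2) := by
  obtain ⟨k, hk⟩ := hodd
  subst hk
  have e1 : (2 * k + 1 + 1) / 2 = k + 1 := by omega
  have e2 : (2 * k + 1) / 2 = k := by omega
  simp only [e1, e2] at h1 h2 ⊢
  set A := i * (2 * k + 1) with hA
  set B := j * (2 * k + 1) with hB
  have hAB : A + (2 * k + 1) ≤ B := by
    have : (i + 1) * (2 * k + 1) ≤ j * (2 * k + 1) :=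
      Nat.mul_le_mul_right _ (by omega)
    calc A + (2 * k + 1) = (i + 1) * (2 * k + 1) := by ring
      _ ≤ B := this
  have eI : (i + 1) * (2 * k + 1) = A + (2 * k + 1) := by ring
  have eJ : (j + 1) * (2 * k + 1) = B + (2 * k + 1) := by ring
  have eJI : (j - i) * (2 * k + 1) = B - A := by
    rw [Nat.sub_mul]
  simp only [eI, eJ, eJI] at h1 h2 ⊢
  -- closed forms for f on the two halves
  have H1 : ∀ x, A + 1 ≤ x → x ≤ A + (k + 1) → f x = A + B + k + 2 - x := by
    intro x hx1 hx2
    have h := h1 (x - A) (Set.mem_Icc.mpr ⟨by omega, by omega⟩)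
    rw [show A + (x - A) = x by omega] at h
    rw [h]; omega
  have H2 : ∀ x, A + k + 2 ≤ x → x ≤ A + 2 * k + 1 → f x = A + B + 3 * k + 3 - x := by
    intro x hx1 hx2
    have h := h2 (x - A - (k + 1)) (Set.mem_Icc.mpr ⟨by omega, by omega⟩)
    rw [show A + (k + 1) + (x - A - (k + 1)) = x by omega] at h
    rw [h]; omega
  constructor
  · refine ⟨?_, ?_, ?_⟩
    · -- MapsTo
      intro x hx
      rw [Set.mem_Icc] at hx ⊢
      rcases le_or_gt x (A + (k + 1)) with h | h
      · rw [H1 x (by omega) h]; omega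
      · rw [H2 x (by omega) (by omega)]; omega
    · -- InjOn
      intro a ha b hb hab
      rw [Set.mem_Icc] at ha hb
      rcases le_or_gt a (A + (k + 1)) with h | h <;>
        rcases le_or_gt b (A + (k + 1)) with h' | h'
      · rw [H1 a (by omega) (by omega), H1 b (by omega) (by omega)] at hab; omega
      · rw [H1 a (by omega) (by omega), H2 b (by omega) (by omega)] at hab; omega
      · rw [H2 a (by omega) (by omega), H1 b (by omega) (by omega)] at hab; omega
      · rw [H2 a (by omega) (by omega), H2 b (by omega) (by omega)] at hab; omega
    · -- SurjOn
      intro n hn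
      rw [Set.mem_Icc] at hn
      rcases le_or_gt n (B + k + 1) with h | h
      · exact ⟨A + B + k + 2 - n, Set.mem_Icc.mpr ⟨by omega, by omega⟩,
          by rw [H1 _ (by omega) (by omega)]; omega⟩
      · exact ⟨A + B + 3 * k + 3 - n, Set.mem_Icc.mpr ⟨by omega, by omega⟩,
          by rw [H2 _ (by omega) (by omega)]; omega⟩
  · ext n
    simp only [Set.mem_image, Set.mem_Icc]
    constructor
    · rintro ⟨x, ⟨hx1, hx2⟩, rfl⟩
      rcases le_or_gt x (A + (k + 1)) with h | h
      · rw [H1 x (by omega) h]; omega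
      · rw [H2 x (by omega) (by omega)]; omega
    · rintro ⟨hn1, hn2⟩
      rcases Nat.even_or_odd (A + B + k + n) with he | he
      · obtain ⟨t, ht⟩ := he
        refine ⟨t + 1 - n, ⟨by omega, by omega⟩, ?_⟩
        rw [H1 _ (by omega) (by omega)]; omega
      · obtain ⟨t, ht⟩ := he
        refine ⟨t + k + 2 - n, ⟨by omega, by omega⟩, ?_⟩
        rw [H2 _ (by omega) (by omega)]; omega
end

section
/- Let T be a forest on vertex set V, and S ⊆ V with |S| = s. Then the induced forest T[S] admits an injective labelling ψ : S → I, where I is any interval of 3s consecutive integers, such that the differences |ψ(x) - ψ(y)| over edges xy of T[S] are pairwise distinct and all lie in {1, ..., 3s - 1}. -/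
open SimpleGraph Finset

lemma exists_pseudo_leaf {W : Type*} [Fintype W] [Nonempty W] (H : SimpleGraph W)
    (hH : H.IsAcyclic) : ∃ v : W, ∀ a b : W, H.Adj v a → H.Adj v b → a = b := by
  classical
  by_contra hcon
  push_neg at hcon
  set P : ℕ → Prop := fun n => ∃ (x y : W) (p : H.Walk x y), p.IsPath ∧ p.length = n with hP
  have h0 : P 0 := ⟨Classical.arbitrary W, Classical.arbitrary W, Walk.nil, Walk.IsPath.nil, rfl⟩
  have hbd : ∀ n, P n → n < Fintype.card W := by
    rintro n ⟨x, y, p, hp, rfl⟩; exact hp.length_lt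
  let T : Finset ℕ := (Finset.range (Fintype.card W)).filter P
  have hT0 : 0 ∈ T := by
    simp only [T, Finset.mem_filter, Finset.mem_range]
    exact ⟨hbd 0 h0, h0⟩
  have hTne : T.Nonempty := ⟨0, hT0⟩
  set n₀ := T.max' hTne with hn₀
  have hmax : ∀ m, P m → m ≤ n₀ := by
    intro m hm
    exact T.le_max' m (by simp only [T, Finset.mem_filter, Finset.mem_range]; exact ⟨hbd m hm, hm⟩)
  have hPn₀ : P n₀ := by
    have := T.max'_mem hTne
    simp only [T, Finset.mem_filter] at this
    exact this.2
  obtain ⟨x, y, p, hp, hlen⟩ := hPn₀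
  obtain ⟨a, b, hxa, hxb, hab⟩ := hcon x
  have hsup : ∀ w, H.Adj x w → w ∈ p.support := by
    intro w hw
    by_contra hns
    have hP1 : P (n₀ + 1) := ⟨w, y, Walk.cons hw.symm p, hp.cons hns, by simp [hlen]⟩
    exact absurd (hmax _ hP1) (by omega)
  have key : ∀ w (hw : H.Adj x w), p.getVert 1 = w := by
    intro w hw
    have hwsup := hsup w hw
    have huniq : (Path.singleton hw) = ⟨p.takeUntil w hwsup, hp.takeUntil hwsup⟩ :=
      hH.path_unique _ _
    have h2 : p.takeUntil w hwsup = Walk.cons hw Walk.nil := by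
      have := congrArg Subtype.val huniq
      simpa [Path.singleton] using this.symm
    have h3 : p = Walk.cons hw (p.dropUntil w hwsup) := by
      conv_lhs => rw [← p.take_spec hwsup]
      rw [h2]
      rfl
    rw [h3]
    simp [Walk.getVert_cons_succ]
  exact hab ((key a hxa).symm.trans (key b hxb))

lemma exists_leaf_in {V : Type*} [Fintype V] [DecidableEq V] (G : SimpleGraph V)
    (hF : G.IsAcyclic) (S : Finset V) (hS : S.Nonempty) :
    ∃ v ∈ S, ∀ a ∈ S, ∀ b ∈ S, G.Adj v a → G.Adj v b → a = b := by
  classical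
  have hind : (G.induce (↑S : Set V)).IsAcyclic := by
    intro v c hc
    exact hF _ (hc.map (f := (SimpleGraph.Embedding.induce (G := G) (↑S : Set V)).toHom) (SimpleGraph.Embedding.induce (G := G) (↑S : Set V)).injective)
  haveI : Nonempty ↥(↑S : Set V) := ⟨⟨hS.choose, hS.choose_spec⟩⟩
  obtain ⟨v, hv⟩ := exists_pseudo_leaf _ hind
  refine ⟨v.1, v.2, fun a ha b hb hva hvb => ?_⟩
  have := hv ⟨a, ha⟩ ⟨b, hb⟩ hva hvb
  exact congrArg Subtype.val this

open SimpleGraph Finset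

section
variable {V : Type*} [Fintype V] [DecidableEq V]

open Classical in
/-- The finset of natAbs differences over adjacent pairs within `S`. -/
noncomputable def diffSet (G : SimpleGraph V) (ψ : V → ℕ) (S : Finset V) : Finset ℕ :=
  ((S ×ˢ S).filter fun p => G.Adj p.1 p.2).image fun p : V × V => ((ψ p.1 : ℤ) - ψ p.2).natAbs

lemma mem_diffSet {G : SimpleGraph V} {ψ : V → ℕ} {S : Finset V} {d : ℕ} :
    d ∈ diffSet G ψ S ↔ ∃ x ∈ S, ∃ y ∈ S, G.Adj x y ∧ ((ψ x : ℤ) - ψ y).natAbs = d := by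
  classical
  simp only [diffSet, Finset.mem_image, Finset.mem_filter, Finset.mem_product, Prod.exists]
  constructor
  · rintro ⟨x, y, ⟨⟨hx, hy⟩, hadj⟩, rfl⟩; exact ⟨x, hx, y, hy, hadj, rfl⟩
  · rintro ⟨x, hx, y, hy, hadj, rfl⟩; exact ⟨x, y, ⟨⟨hx, hy⟩, hadj⟩, rfl⟩
end

lemma aux_main {V : Type*} [Fintype V] [DecidableEq V] (G : SimpleGraph V)
    (hF : G.IsAcyclic) :
    ∀ (n : ℕ) (S : Finset V) (a : ℕ), S.card = n →
    ∃ ψ : V → ℕ,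
      Set.InjOn ψ ↑S ∧
      (∀ v ∈ S, ψ v ∈ Set.Ico a (a + 3 * S.card)) ∧
      (∀ x ∈ S, ∀ y ∈ S, G.Adj x y →
        ((ψ x : ℤ) - ψ y).natAbs ∈ Set.Icc 1 (3 * S.card - 1)) ∧
      (∀ x ∈ S, ∀ y ∈ S, ∀ x' ∈ S, ∀ y' ∈ S, G.Adj x y → G.Adj x' y' →
        ((ψ x : ℤ) - ψ y).natAbs = ((ψ x' : ℤ) - ψ y').natAbs →
        s(x, y) = s(x', y')) ∧
      (diffSet G ψ S).card ≤ S.card - 1 := by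
  intro n
  induction n using Nat.strong_induction_on with
  | _ n IH =>
  intro S a hcard
  classical
  rcases Nat.eq_zero_or_pos n with h0 | hpos
  · -- empty case
    have hS : S = ∅ := Finset.card_eq_zero.mp (by omega)
    subst hS
    refine ⟨fun _ => a, ?_, ?_, ?_, ?_, ?_⟩
    · simp [Set.InjOn]
    · simp
    · simp
    · simp
    · simp [diffSet]
  · have hSne : S.Nonempty := Finset.card_pos.mp (by omega)
    obtain ⟨v, hvS, hleaf⟩ := exists_leaf_in G hF S hSne
    set S' := S.erase v with hS'
    have hvS' : v ∉ S' := Finset.notMem_erase v S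
    have hS'sub : ∀ u ∈ S', u ∈ S := fun u hu => Finset.mem_of_mem_erase hu
    have hS'card : S'.card = n - 1 := by rw [hS', Finset.card_erase_of_mem hvS, hcard]
    obtain ⟨ψ', hinj', hrange', hedge', hdist', hdiff'⟩ := IH (n - 1) (by omega) S' a hS'card
    rw [hS'card] at hrange' hedge' hdiff'
    set N := S'.filter (G.Adj v) with hN
    have hNsub : ∀ w ∈ N, w ∈ S' ∧ G.Adj v w := fun w hw => Finset.mem_filter.mp hw
    have hNone : ∀ w ∈ N, ∀ w' ∈ N, w = w' := by
      intro w hw w' hw'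
      obtain ⟨hw1, hw2⟩ := hNsub w hw
      obtain ⟨hw1', hw2'⟩ := hNsub w' hw'
      exact hleaf w (hS'sub w hw1) w' (hS'sub w' hw1') hw2 hw2'
    have hNcard : N.card ≤ 1 := Finset.card_le_one.mpr (fun w hw w' hw' => hNone w hw w' hw')
    set D := diffSet G ψ' S' with hD
    set F : Finset ℕ :=
      S'.image ψ' ∪ N.biUnion (fun w => D.biUnion fun d => {ψ' w + d, ψ' w - d}) with hFdef
    have hFcard : F.card < 3 * n := by
      have h1 : (S'.image ψ').card ≤ n - 1 := le_trans (Finset.card_image_le) (le_of_eq hS'card)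
      have h2 : (N.biUnion (fun w => D.biUnion fun d => {ψ' w + d, ψ' w - d})).card
          ≤ N.card * ((n - 1 - 1) * 2) := by
        apply Finset.card_biUnion_le_card_mul
        intro w _
        calc (D.biUnion fun d => ({ψ' w + d, ψ' w - d} : Finset ℕ)).card
            ≤ D.card * 2 := by
              apply Finset.card_biUnion_le_card_mul
              intro d _
              exact le_trans (Finset.card_insert_le _ _) (by simp)
          _ ≤ (n - 1 - 1) * 2 := by
              have := hdiff'
              omega
      have hN1 : N.card * ((n - 1 - 1) * 2) ≤ (n - 1 - 1) * 2 := by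
        rcases Nat.le_one_iff_eq_zero_or_eq_one.mp hNcard with h | h <;> simp [h]
      calc F.card ≤ (S'.image ψ').card
            + (N.biUnion (fun w => D.biUnion fun d => {ψ' w + d, ψ' w - d})).card :=
            Finset.card_union_le _ _
        _ ≤ (n - 1) + (n - 1 - 1) * 2 := add_le_add h1 (le_trans h2 hN1)
        _ < 3 * n := by omega
    have hex : ∃ ℓ ∈ Finset.Ico a (a + 3 * n), ℓ ∉ F := by
      rw [← Finset.not_subset]
      intro hsub
      have hc := Finset.card_le_card hsub
      rw [Nat.card_Ico, Nat.add_sub_cancel_left] at hc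
      omega
    obtain ⟨ℓ, hℓI, hℓF⟩ := hex
    rw [Finset.mem_Ico] at hℓI
    set ψ : V → ℕ := Function.update ψ' v ℓ with hψdef
    have hψv : ψ v = ℓ := Function.update_self v ℓ ψ'
    have hψ : ∀ u ∈ S', ψ u = ψ' u := by
      intro u hu
      exact Function.update_of_ne (Finset.ne_of_mem_erase hu) ℓ ψ'
    have hsplit : ∀ x ∈ S, x = v ∨ x ∈ S' := by
      intro x hx
      rcases eq_or_ne x v with h | h
      · exact Or.inl h
      · exact Or.inr (Finset.mem_erase.mpr ⟨h, hx⟩)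
    have hℓnotim : ∀ u ∈ S', ℓ ≠ ψ' u := by
      intro u hu h
      exact hℓF (Finset.mem_union_left _ (Finset.mem_image.mpr ⟨u, hu, h.symm⟩))
    have hℓbad : ∀ w ∈ N, ∀ d ∈ D, ℓ ≠ ψ' w + d ∧ ℓ ≠ ψ' w - d := by
      intro w hw d hd
      constructor <;> intro h <;> apply hℓF <;>
        refine Finset.mem_union_right _ (Finset.mem_biUnion.mpr ⟨w, hw, Finset.mem_biUnion.mpr ⟨d, hd, ?_⟩⟩) <;>
        simp [h]
    have hrange'' : ∀ u ∈ S', a ≤ ψ' u ∧ ψ' u < a + 3 * (n - 1) := by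
      intro u hu
      have := hrange' u hu
      rw [Set.mem_Ico] at this
      exact this
    -- the neighbor membership fact
    have hadjN : ∀ y ∈ S', G.Adj v y → y ∈ N := by
      intro y hy hadj
      exact Finset.mem_filter.mpr ⟨hy, hadj⟩
    have hDmem : ∀ x ∈ S', ∀ y ∈ S', G.Adj x y → ((ψ' x : ℤ) - ψ' y).natAbs ∈ D := by
      intro x hx y hy hadj
      exact mem_diffSet.mpr ⟨x, hx, y, hy, hadj, rfl⟩
    refine ⟨ψ, ?_, ?_, ?_, ?_, ?_⟩
    · -- InjOn
      intro x hx y hy hxy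
      rw [Finset.mem_coe] at hx hy
      rcases hsplit x hx with rfl | hx' <;> rcases hsplit y hy with rfl | hy'
      · rfl
      · rw [hψv, hψ y hy'] at hxy
        exact absurd hxy (hℓnotim y hy')
      · rw [hψv, hψ x hx'] at hxy
        exact absurd hxy.symm (hℓnotim x hx')
      · exact hinj' (Finset.mem_coe.mpr hx') (Finset.mem_coe.mpr hy')
          (by rwa [hψ x hx', hψ y hy'] at hxy)
    · -- range
      intro u hu
      rw [Set.mem_Ico, hcard]
      rcases hsplit u hu with rfl | hu'
      · rw [hψv]; omega
      · rw [hψ u hu']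
        have := hrange'' u hu'
        omega
    · -- edge differences in range
      intro x hx y hy hadj
      rw [Set.mem_Icc, hcard]
      rcases hsplit x hx with rfl | hx' <;> rcases hsplit y hy with rfl | hy'
      · exact absurd hadj (G.irrefl)
      · rw [hψv, hψ y hy']
        have h1 := hrange'' y hy'
        have h2 := hℓnotim y hy'
        omega
      · rw [hψv, hψ x hx']
        have h1 := hrange'' x hx'
        have h2 := hℓnotim x hx'
        omega
      · rw [hψ x hx', hψ y hy']
        have := hedge' x hx' y hy' hadj
        rw [Set.mem_Icc] at this
        have h1 := hrange'' x hx'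
        have h2 := hrange'' y hy'
        omega
    · -- distinctness
      intro x hx y hy x' hx' y' hy' hadj hadj' heq
      -- classify each pair
      have classify : ∀ p ∈ S, ∀ q ∈ S, G.Adj p q →
          (p ∈ S' ∧ q ∈ S') ∨ (p = v ∧ q ∈ N) ∨ (q = v ∧ p ∈ N) := by
        intro p hp q hq hpq
        rcases hsplit p hp with rfl | hp' <;> rcases hsplit q hq with rfl | hq'
        · exact absurd hpq (G.irrefl)
        · exact Or.inr (Or.inl ⟨rfl, hadjN q hq' hpq⟩)
        · exact Or.inr (Or.inr ⟨rfl, hadjN p hp' hpq.symm⟩)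
        · exact Or.inl ⟨hp', hq'⟩
      -- helper: difference of a v-edge can't equal a difference of an S'-edge
      have crossfalse : ∀ w ∈ N, ∀ p ∈ S', ∀ q ∈ S', G.Adj p q →
          ((ψ v : ℤ) - ψ w).natAbs = ((ψ p : ℤ) - ψ q).natAbs → False := by
        intro w hw p hp q hq hpq he
        have hd : ((ψ' p : ℤ) - ψ' q).natAbs ∈ D := hDmem p hp q hq hpq
        have hb := hℓbad w hw _ hd
        rw [hψv, hψ w (hNsub w hw).1, hψ p hp, hψ q hq] at he
        omega
      rcases classify x hx y hy hadj with ⟨hx1, hy1⟩ | ⟨rfl, hy1⟩ | ⟨rfl, hx1⟩ <;>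
        rcases classify x' hx' y' hy' hadj' with ⟨hx1', hy1'⟩ | ⟨rfl, hy1'⟩ | ⟨rfl, hx1'⟩
      · -- both old
        apply hdist' x hx1 y hy1 x' hx1' y' hy1' hadj hadj'
        rwa [hψ x hx1, hψ y hy1, hψ x' hx1', hψ y' hy1'] at heq
      · exact absurd heq.symm (fun h => crossfalse y' hy1' x hx1 y hy1 hadj h)
      · exact absurd heq.symm (fun h => crossfalse x' hx1' x hx1 y hy1 hadj
          (by rw [← h]; omega))
      · exact absurd heq (fun h => crossfalse y hy1 x' hx1' y' hy1' hadj' h)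
      · rw [hNone y hy1 y' hy1']
      · rw [hNone y hy1 x' hx1', Sym2.eq_swap]
      · exact absurd heq (fun h => crossfalse x hx1 x' hx1' y' hy1' hadj'
          (by rw [← h]; omega))
      · rw [hNone x hx1 y' hy1', Sym2.eq_swap]
      · rw [hNone x hx1 x' hx1']
    · -- diff set cardinality
      have hsub : diffSet G ψ S ⊆ D ∪ N.image (fun w => ((ℓ : ℤ) - ψ' w).natAbs) := by
        intro d hd
        obtain ⟨x, hx, y, hy, hadj, rfl⟩ := mem_diffSet.mp hd
        rcases hsplit x hx with rfl | hx' <;> rcases hsplit y hy with rfl | hy'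
        · exact absurd hadj (G.irrefl)
        · refine Finset.mem_union_right _ (Finset.mem_image.mpr ⟨y, hadjN y hy' hadj, ?_⟩)
          rw [hψv, hψ y hy']
        · refine Finset.mem_union_right _ (Finset.mem_image.mpr ⟨x, hadjN x hx' hadj.symm, ?_⟩)
          rw [hψv, hψ x hx']
          omega
        · refine Finset.mem_union_left _ ?_
          rw [hψ x hx', hψ y hy']
          exact hDmem x hx' y hy' hadj
      have h3 : (N.image (fun w => ((ℓ : ℤ) - ψ' w).natAbs)).card ≤ 1 :=
        le_trans Finset.card_image_le hNcard
      calc (diffSet G ψ S).card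
          ≤ (D ∪ N.image (fun w => ((ℓ : ℤ) - ψ' w).natAbs)).card := Finset.card_le_card hsub
        _ ≤ D.card + (N.image (fun w => ((ℓ : ℤ) - ψ' w).natAbs)).card :=
            Finset.card_union_le _ _
        _ ≤ (n - 1 - 1) + N.card := add_le_add hdiff' Finset.card_image_le
        _ ≤ S.card - 1 := by
            have h5 : N.card ≤ S'.card := Finset.card_filter_le _ _
            rw [hcard]
            omega


theorem stmt_10 {V : Type*} [Fintype V] [DecidableEq V] (G : SimpleGraph V)
    (hF : G.IsAcyclic) (S : Finset V) (a : ℕ) :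
    ∃ ψ : V → ℕ,
      Set.InjOn ψ ↑S ∧
      (∀ v ∈ S, ψ v ∈ Set.Ico a (a + 3 * S.card)) ∧
      (∀ x ∈ S, ∀ y ∈ S, G.Adj x y →
        ((ψ x : ℤ) - ψ y).natAbs ∈ Set.Icc 1 (3 * S.card - 1)) ∧
      (∀ x ∈ S, ∀ y ∈ S, ∀ x' ∈ S, ∀ y' ∈ S, G.Adj x y → G.Adj x' y' →
        ((ψ x : ℤ) - ψ y).natAbs = ((ψ x' : ℤ) - ψ y').natAbs →
        s(x, y) = s(x', y')) := by
  obtain ⟨ψ, h1, h2, h3, h4, _⟩ := aux_main G hF S.card S a rfl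
  exact ⟨ψ, h1, h2, h3, h4⟩
end

section
/- Let n ≥ 1 be even, s ≤ n/2, A = {1,...,n/2}, B = {n/2+1,...,n}. There exists a bipartite graph G with parts A and B such that: (a) every edge ab (a ∈ A, b ∈ B) satisfies b - a ≠ 1; (b) Δ(G) ≤ 2s; (c) every vertex in {2s,...,n/2-s} ∪ {n/2+2s,...,n-s} has degree exactly 2s; (d) for every c ∈ {2s,...,n-2s}, exactly s edges ab of G satisfy b - a = c; (e) for every c ∈ {1,...,n-1}, at most s edges satisfy b - a = c. -/
/-!
The pair of colour `c` with index `i` in the construction has `a + b = n + i`, so the graph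
consists of the pairs with `b - a ≥ 2` across the parts whose *level* `a + b - n` lies in
`[1, 2s]`. Both the edges at a fixed vertex and the edges of a fixed colour are determined by
their level, and in the colour case the level is pinned down modulo 2, hence by
`(level + 1) / 2 ∈ [1, s]`. This gives the upper bounds; in the stated ranges every admissible
level is realised by a pair inside `A × B`, which gives the equalities.
-/

open Finset

namespace LevelEdges

def levelEdges (n s : ℕ) : Finset (ℕ × ℕ) :=
  (Icc 1 (n / 2) ×ˢ Icc (n / 2 + 1) n).filter
    fun e => n + 1 ≤ e.1 + e.2 ∧ e.1 + e.2 ≤ n + 2 * s ∧ e.1 + 2 ≤ e.2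

variable {n s : ℕ}

theorem mem_levelEdges {a b : ℕ} :
    (a, b) ∈ levelEdges n s ↔ 1 ≤ a ∧ a ≤ n / 2 ∧ n / 2 + 1 ≤ b ∧ b ≤ n ∧
      n + 1 ≤ a + b ∧ a + b ≤ n + 2 * s ∧ a + 2 ≤ b := by
  simp only [levelEdges, mem_filter, mem_product, mem_Icc]
  tauto

theorem card_incident_le (v : ℕ) :
    ((levelEdges n s).filter fun e => e.1 = v ∨ e.2 = v).card ≤ 2 * s := by
  simpa using card_le_card_of_injOn (t := Icc 1 (2 * s)) (fun e => e.1 + e.2 - n)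
    (by
      rintro ⟨a, b⟩ he
      simp only [coe_filter, Set.mem_ofPred_eq, mem_levelEdges] at he
      simp only [coe_Icc, Set.mem_Icc]
      omega)
    (by
      rintro ⟨a, b⟩ he ⟨a', b'⟩ he' hab
      simp only [coe_filter, Set.mem_ofPred_eq, mem_levelEdges] at he he' hab
      simp only [Prod.mk.injEq]
      omega)

theorem card_colour_le (c : ℕ) :
    ((levelEdges n s).filter fun e => e.2 - e.1 = c).card ≤ s := by
  simpa using card_le_card_of_injOn (t := Icc 1 s) (fun e => (e.1 + e.2 - n + 1) / 2)
    (by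
      rintro ⟨a, b⟩ he
      simp only [coe_filter, Set.mem_ofPred_eq, mem_levelEdges] at he
      simp only [coe_Icc, Set.mem_Icc]
      omega)
    (by
      rintro ⟨a, b⟩ he ⟨a', b'⟩ he' hab
      simp only [coe_filter, Set.mem_ofPred_eq, mem_levelEdges] at he he' hab
      simp only [Prod.mk.injEq]
      omega)

theorem card_incident_eq_of_mem_left {v : ℕ} (hv : v ∈ Icc (2 * s) (n / 2 - s)) :
    ((levelEdges n s).filter fun e => e.1 = v ∨ e.2 = v).card = 2 * s := by
  refine (card_incident_le v).antisymm ?_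
  simpa using card_le_card_of_injOn (s := Icc 1 (2 * s)) (fun k => (v, n - v + k))
    (by
      intro k hk
      simp only [mem_Icc, coe_Icc, Set.mem_Icc] at hk hv
      simp only [coe_filter, Set.mem_ofPred_eq, mem_levelEdges, true_or, and_true]
      omega)
    (fun k _ k' _ h => by simpa using h)

theorem card_incident_eq_of_mem_right (hn : Even n) {v : ℕ}
    (hv : v ∈ Icc (n / 2 + 2 * s) (n - s)) :
    ((levelEdges n s).filter fun e => e.1 = v ∨ e.2 = v).card = 2 * s := by
  have hn2 := Nat.even_iff.mp hn
  refine (card_incident_le v).antisymm ?_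
  simpa using card_le_card_of_injOn (s := Icc 1 (2 * s)) (fun k => (n + k - v, v))
    (by
      intro k hk
      simp only [mem_Icc, coe_Icc, Set.mem_Icc] at hk hv
      simp only [coe_filter, Set.mem_ofPred_eq, mem_levelEdges, or_true, and_true]
      omega)
    (by
      intro k hk k' hk' h
      simp only [Prod.mk.injEq, coe_Icc, Set.mem_Icc, mem_Icc] at h hk hk' hv
      omega)

theorem card_colour_eq (hn : Even n) {c : ℕ} (hc : c ∈ Icc (2 * s) (n - 2 * s)) :
    ((levelEdges n s).filter fun e => e.2 - e.1 = c).card = s := by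
  have hn2 := Nat.even_iff.mp hn
  refine (card_colour_le c).antisymm ?_
  -- `k` goes to the edge of colour `c` at level `2k - c % 2`, the one of its parity rounding to `k`
  simpa using card_le_card_of_injOn (s := Icc 1 s)
    (fun k => ((n + (2 * k - c % 2) - c) / 2, (n + (2 * k - c % 2) + c) / 2))
    (by
      intro k hk
      simp only [mem_Icc, coe_Icc, Set.mem_Icc] at hk hc
      simp only [coe_filter, Set.mem_ofPred_eq, mem_levelEdges]
      omega)
    (by
      intro k hk k' hk' h
      simp only [Prod.mk.injEq, coe_Icc, Set.mem_Icc] at h hk hk'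
      omega)

end LevelEdges

open LevelEdges in
theorem stmt_13_general (n s : ℕ) (heven : Even n) :
    ∃ E : Finset (ℕ × ℕ),
      (∀ e ∈ E, e.1 ∈ Finset.Icc 1 (n / 2) ∧ e.2 ∈ Finset.Icc (n / 2 + 1) n) ∧
      (∀ e ∈ E, e.2 - e.1 ≠ 1) ∧
      (∀ v : ℕ, (E.filter (fun e => e.1 = v ∨ e.2 = v)).card ≤ 2 * s) ∧
      (∀ v ∈ Finset.Icc (2 * s) (n / 2 - s) ∪ Finset.Icc (n / 2 + 2 * s) (n - s),
        (E.filter (fun e => e.1 = v ∨ e.2 = v)).card = 2 * s) ∧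
      (∀ c ∈ Finset.Icc (2 * s) (n - 2 * s),
        (E.filter (fun e => e.2 - e.1 = c)).card = s) ∧
      (∀ c ∈ Finset.Icc 1 (n - 1),
        (E.filter (fun e => e.2 - e.1 = c)).card ≤ s) := by
  refine ⟨levelEdges n s, ?_, ?_, card_incident_le, ?_, fun c hc => card_colour_eq heven hc,
    fun c _ => card_colour_le c⟩
  · rintro ⟨a, b⟩ he
    rw [mem_levelEdges] at he
    simp only [mem_Icc]
    omega
  · rintro ⟨a, b⟩ he
    rw [mem_levelEdges] at he
    omega
  · intro v hv
    rcases mem_union.mp hv with hv | hv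
    · exact card_incident_eq_of_mem_left hv
    · exact card_incident_eq_of_mem_right heven hv

theorem stmt_13 (n s : ℕ) (hn : 1 ≤ n) (heven : Even n) (hs : s ≤ n / 2) :
    ∃ E : Finset (ℕ × ℕ),
      (∀ e ∈ E, e.1 ∈ Finset.Icc 1 (n / 2) ∧ e.2 ∈ Finset.Icc (n / 2 + 1) n) ∧
      (∀ e ∈ E, e.2 - e.1 ≠ 1) ∧
      (∀ v : ℕ, (E.filter (fun e => e.1 = v ∨ e.2 = v)).card ≤ 2 * s) ∧
      (∀ v ∈ Finset.Icc (2 * s) (n / 2 - s) ∪ Finset.Icc (n / 2 + 2 * s) (n - s),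
        (E.filter (fun e => e.1 = v ∨ e.2 = v)).card = 2 * s) ∧
      (∀ c ∈ Finset.Icc (2 * s) (n - 2 * s),
        (E.filter (fun e => e.2 - e.1 = c)).card = s) ∧
      (∀ c ∈ Finset.Icc 1 (n - 1),
        (E.filter (fun e => e.2 - e.1 = c)).card ≤ s) :=
  stmt_13_general n s heven
end

section
/- Suppose that for every ε' > 0 there is N such that every tree T' on n' > N vertices admits an injective map φ* : V(T') → {1,...,⌈(1+ε')n'⌉} whose set of edge-differences has size at least (1-ε')n'. Then for every ε ∈ (0,1) there is n₀ such that every tree T on n > n₀ vertices satisfies gs(T) ≥ (1-ε)n, where gs(T) is the maximum size of the set {|φ(x)-φ(y)| : xy ∈ E(T)} over all bijections φ : V(T) → {1,...,n}. -/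
open SimpleGraph

lemma aux_exists_connected_subset {n : ℕ} (T : SimpleGraph (Fin n)) (hc : T.Connected) :
    ∀ m : ℕ, 1 ≤ m → m ≤ n →
    ∃ S : Finset (Fin n), S.card = m ∧ (T.induce (S : Set (Fin n))).Connected := by
  intro m
  induction m with
  | zero => omega
  | succ k ih =>
    intro _ hmn
    rcases Nat.eq_zero_or_pos k with hk | hk
    · subst hk
      have hn : 0 < n := by omega
      refine ⟨{⟨0, hn⟩}, by simp, ?_⟩
      rw [connected_iff]
      refine ⟨?_, ⟨⟨⟨0, hn⟩, by simp⟩⟩⟩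
      intro a b
      have hab : a = b := by
        apply Subtype.ext
        have ha := a.2
        have hb := b.2
        simp only [Finset.coe_singleton, Set.mem_singleton_iff] at ha hb
        rw [ha, hb]
      exact hab ▸ Reachable.refl a
    · obtain ⟨S, hScard, hSconn⟩ := ih hk (by omega)
      have hcomp : Sᶜ.Nonempty := by
        rw [← Finset.card_pos, Finset.card_compl, hScard, Fintype.card_fin]
        omega
      obtain ⟨x, hx⟩ := hcomp
      rw [Finset.mem_compl] at hx
      have hSpos : S.Nonempty := Finset.card_pos.mp (by omega)
      obtain ⟨u, hu⟩ := hSpos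
      obtain ⟨p⟩ := hc.preconnected u x
      obtain ⟨d, -, hdS, hdnS⟩ := p.exists_boundary_dart (S : Set (Fin n))
        (by simpa using hu) (by simpa using hx)
      have hadj : T.Adj d.fst d.snd := d.adj
      rw [Finset.mem_coe] at hdS hdnS
      refine ⟨insert d.snd S, by rw [Finset.card_insert_of_notMem hdnS, hScard], ?_⟩
      have hmemS : ∀ v : Fin n, v ∈ S → v ∈ ((insert d.snd S : Finset (Fin n)) : Set (Fin n)) := by
        intro v hv
        simp [Finset.mem_insert, hv]
      have hsnd : d.snd ∈ ((insert d.snd S : Finset (Fin n)) : Set (Fin n)) := by simp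
      let ι : T.induce (S : Set (Fin n)) →g T.induce ((insert d.snd S : Finset (Fin n)) : Set (Fin n)) :=
        ⟨fun a => ⟨a.1, hmemS a.1 (by exact_mod_cast a.2)⟩, fun {a b} hab => hab⟩
      rw [connected_iff]
      refine ⟨?_, ⟨⟨d.snd, hsnd⟩⟩⟩
      have key : ∀ c : ↥((insert d.snd S : Finset (Fin n)) : Set (Fin n)),
          (T.induce ((insert d.snd S : Finset (Fin n)) : Set (Fin n))).Reachable c ⟨d.fst, hmemS _ hdS⟩ := by
        intro c
        have hc2 := c.2
        rw [Finset.mem_coe, Finset.mem_insert] at hc2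
        rcases hc2 with h | h
        · have : (T.induce ((insert d.snd S : Finset (Fin n)) : Set (Fin n))).Adj c ⟨d.fst, hmemS _ hdS⟩ := by
            show T.Adj c.1 d.fst
            rw [h]
            exact hadj.symm
          exact this.reachable
        · have hr := hSconn.preconnected ⟨c.1, by exact_mod_cast h⟩ ⟨d.fst, by exact_mod_cast hdS⟩
          have := hr.map ι
          exact this
      intro a b
      exact (key a).trans (key b).symm

theorem stmt_16
    (H : ∀ ε' : ℝ, 0 < ε' → ∃ N : ℕ, ∀ n' : ℕ, N < n' →
      ∀ T' : SimpleGraph (Fin n'), T'.IsTree →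
        ∃ φ : Fin n' → ℕ, Function.Injective φ ∧
          (∀ v, φ v ∈ Set.Icc 1 (⌈(1 + ε') * (n' : ℝ)⌉₊)) ∧
          (1 - ε') * (n' : ℝ) ≤
            ({d : ℕ | ∃ x y, T'.Adj x y ∧ d = ((φ x : ℤ) - φ y).natAbs}.ncard : ℝ)) :
    ∀ ε : ℝ, 0 < ε → ε < 1 → ∃ n₀ : ℕ, ∀ n : ℕ, n₀ < n →
      ∀ T : SimpleGraph (Fin n), T.IsTree →
        ∃ ψ : Fin n → ℕ, Set.BijOn ψ Set.univ (Set.Icc 1 n) ∧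
          (1 - ε) * (n : ℝ) ≤
            ({d : ℕ | ∃ x y, T.Adj x y ∧ d = ((ψ x : ℤ) - ψ y).natAbs}.ncard : ℝ) := by
  intro ε hε hε1
  obtain ⟨N, hN⟩ := H (ε / 2) (by positivity)
  refine ⟨max (2 * N + 2) ⌈(4 + 2 * ε) / ε ^ 2⌉₊, ?_⟩
  intro n hn T hT
  -- basic numeric facts
  have hn2N : (2 * N + 2 : ℕ) < n := lt_of_le_of_lt (le_max_left _ _) hn
  have hnceil : (⌈(4 + 2 * ε) / ε ^ 2⌉₊ : ℕ) < n := lt_of_le_of_lt (le_max_right _ _) hn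
  have hnpos : 0 < n := by omega
  have hnR : (4 + 2 * ε) / ε ^ 2 ≤ (n : ℝ) := by
    calc (4 + 2 * ε) / ε ^ 2 ≤ (⌈(4 + 2 * ε) / ε ^ 2⌉₊ : ℝ) := Nat.le_ceil _
    _ ≤ (n : ℝ) := by exact_mod_cast hnceil.le
  have hnR' : 4 + 2 * ε ≤ ε ^ 2 * n := by
    have h2 : (0 : ℝ) < ε ^ 2 := by positivity
    rw [div_le_iff₀ h2] at hnR
    linarith [hnR]
  set m : ℕ := ⌈(1 - ε / 2) * (n : ℝ)⌉₊ with hm_def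
  have hhalf : (0 : ℝ) < 1 - ε / 2 := by linarith
  have hm_lb : (1 - ε / 2) * (n : ℝ) ≤ (m : ℝ) := Nat.le_ceil _
  have hm_ub : (m : ℝ) < (1 - ε / 2) * (n : ℝ) + 1 := by
    apply Nat.ceil_lt_add_one
    positivity
  have hm1 : 1 ≤ m := by
    rw [hm_def, Nat.one_le_ceil_iff]
    have : (0 : ℝ) < (n : ℝ) := by exact_mod_cast hnpos
    positivity
  have hmn : m ≤ n := by
    rw [hm_def]
    rw [Nat.ceil_le]
    nlinarith [Nat.cast_nonneg (α := ℝ) n]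
  have hNm : N < m := by
    have hcast : ((2 * N + 2 : ℕ) : ℝ) < (n : ℝ) := by exact_mod_cast hn2N
    push_cast at hcast
    have : (N : ℝ) < (m : ℝ) := by nlinarith [Nat.cast_nonneg (α := ℝ) n]
    exact_mod_cast this
  have hRn : ⌈(1 + ε / 2) * (m : ℝ)⌉₊ ≤ n := by
    rw [Nat.ceil_le]
    nlinarith [mul_le_mul_of_nonneg_left hm_ub.le (by linarith : (0:ℝ) ≤ 1 + ε / 2)]
  -- get the connected subset
  obtain ⟨S, hScard, hSconn⟩ := aux_exists_connected_subset T hT.isConnected m hm1 hmn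
  set e : ↥S ≃ Fin m := Finset.equivFinOfCardEq hScard with he_def
  set f : Fin m → Fin n := fun i => ↑(e.symm i) with hf_def
  have hf_inj : Function.Injective f := fun a b hab =>
    e.symm.injective (Subtype.ext hab)
  have hf_mem : ∀ i, f i ∈ S := fun i => (e.symm i).2
  set T' : SimpleGraph (Fin m) := T.comap f with hT'_def
  have hT'adj : ∀ a b, T'.Adj a b ↔ T.Adj (f a) (f b) := fun a b => Iff.rfl
  have hT'tree : T'.IsTree := by
    constructor
    · -- connected via iso to induce
      have iso : T' ≃g T.induce (S : Set (Fin n)) := by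
        refine ⟨(e.symm.trans (Equiv.subtypeEquivRight (fun x => (Finset.mem_coe).symm))), ?_⟩
        intro a b
        exact Iff.rfl
      exact iso.connected_iff.mpr hSconn
    · intro v c hcyc
      let g : T' →g T := ⟨f, fun {a b} hab => hab⟩
      have hgf : ⇑g = f := rfl
      have hg_inj : Function.Injective ⇑g := by rw [hgf]; exact hf_inj
      exact hT.IsAcyclic (c.map g) ((Walk.map_isCycle_iff_of_injective hg_inj).mpr hcyc)
  obtain ⟨φ, hφinj, hφmem, hφcard⟩ := hN m hNm T' hT'tree
  -- sets for extension
  set A : Finset ℕ := Finset.image φ Finset.univ with hA_def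
  have hAcard : A.card = m := by
    rw [hA_def, Finset.card_image_of_injective _ hφinj, Finset.card_univ, Fintype.card_fin]
  have hAsub : A ⊆ Finset.Icc 1 n := by
    intro y hy
    rw [hA_def, Finset.mem_image] at hy
    obtain ⟨i, -, rfl⟩ := hy
    have := hφmem i
    rw [Set.mem_Icc] at this
    exact Finset.mem_Icc.mpr ⟨this.1, this.2.trans hRn⟩
  set B : Finset ℕ := Finset.Icc 1 n \ A with hB_def
  have hBcard : B.card = n - m := by
    rw [hB_def, Finset.card_sdiff_of_subset hAsub, Nat.card_Icc, hAcard]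
    omega
  have hSccard : (Sᶜ : Finset (Fin n)).card = n - m := by
    rw [Finset.card_compl, hScard, Fintype.card_fin]
  set χ : ↥(Sᶜ : Finset (Fin n)) ≃ ↥B := Finset.equivOfCardEq (hSccard.trans hBcard.symm) with hχ_def
  set ψ : Fin n → ℕ := fun v =>
    if h : v ∈ S then φ (e ⟨v, h⟩) else ↑(χ ⟨v, Finset.mem_compl.mpr h⟩) with hψ_def
  have hψS : ∀ (v : Fin n) (h : v ∈ S), ψ v = φ (e ⟨v, h⟩) := by
    intro v h
    rw [hψ_def]
    exact dif_pos h
  have hψSc : ∀ (v : Fin n) (h : v ∉ S), ψ v = ↑(χ ⟨v, Finset.mem_compl.mpr h⟩) := by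
    intro v h
    rw [hψ_def]
    exact dif_neg h
  have hψf : ∀ i, ψ (f i) = φ i := by
    intro i
    rw [hψS (f i) (hf_mem i)]
    congr 1
    have : (⟨f i, hf_mem i⟩ : ↥S) = e.symm i := Subtype.ext rfl
    rw [this, Equiv.apply_symm_apply]
  have hψ_memA : ∀ (v : Fin n), v ∈ S → ψ v ∈ A := by
    intro v h
    rw [hψS v h, hA_def]
    exact Finset.mem_image_of_mem φ (Finset.mem_univ _)
  have hψ_memB : ∀ (v : Fin n), v ∉ S → ψ v ∈ B := by
    intro v h
    rw [hψSc v h]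
    exact (χ ⟨v, Finset.mem_compl.mpr h⟩).2
  have hbij : Set.BijOn ψ Set.univ (Set.Icc 1 n) := by
    refine ⟨?_, ?_, ?_⟩
    · intro v _
      by_cases h : v ∈ S
      · have := hψ_memA v h
        have := hAsub this
        rw [Finset.mem_Icc] at this
        exact Set.mem_Icc.mpr this
      · have := hψ_memB v h
        rw [hB_def, Finset.mem_sdiff] at this
        rw [Finset.mem_Icc] at this
        exact Set.mem_Icc.mpr this.1
    · intro a _ b _ hab
      by_cases ha : a ∈ S <;> by_cases hb : b ∈ S
      · rw [hψS a ha, hψS b hb] at hab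
        have := e.injective (hφinj hab)
        exact congrArg Subtype.val this
      · exfalso
        have h1 := hψ_memA a ha
        have h2 := hψ_memB b hb
        rw [hB_def, Finset.mem_sdiff] at h2
        rw [hab] at h1
        exact h2.2 h1
      · exfalso
        have h1 := hψ_memA b hb
        have h2 := hψ_memB a ha
        rw [hB_def, Finset.mem_sdiff] at h2
        rw [← hab] at h1
        exact h2.2 h1
      · rw [hψSc a ha, hψSc b hb] at hab
        have := χ.injective (Subtype.ext hab)
        have := congrArg Subtype.val this
        exact this
    · intro y hy
      by_cases hyA : y ∈ A
      · rw [hA_def, Finset.mem_image] at hyA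
        obtain ⟨i, -, hiy⟩ := hyA
        exact ⟨f i, Set.mem_univ _, by rw [hψf i, hiy]⟩
      · have hyB : y ∈ B := by
          rw [hB_def, Finset.mem_sdiff]
          exact ⟨Finset.mem_Icc.mpr (Set.mem_Icc.mp hy), hyA⟩
        set v : Fin n := ↑(χ.symm ⟨y, hyB⟩) with hv_def
        have hvS : v ∉ S := Finset.mem_compl.mp (χ.symm ⟨y, hyB⟩).2
        refine ⟨v, Set.mem_univ _, ?_⟩
        rw [hψSc v hvS]
        have : (⟨v, Finset.mem_compl.mpr hvS⟩ : ↥(Sᶜ : Finset (Fin n))) = χ.symm ⟨y, hyB⟩ :=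
          Subtype.ext rfl
        rw [this, Equiv.apply_symm_apply]
  refine ⟨ψ, hbij, ?_⟩
  -- difference set comparison
  have hsub : {d : ℕ | ∃ x y, T'.Adj x y ∧ d = ((φ x : ℤ) - φ y).natAbs} ⊆
      {d : ℕ | ∃ x y, T.Adj x y ∧ d = ((ψ x : ℤ) - ψ y).natAbs} := by
    rintro d ⟨x, y, hxy, hd⟩
    exact ⟨f x, f y, hxy, by rw [hψf, hψf]; exact hd⟩
  have hDfin : {d : ℕ | ∃ x y, T.Adj x y ∧ d = ((ψ x : ℤ) - ψ y).natAbs}.Finite := by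
    apply Set.Finite.subset (Set.finite_range
      (fun p : Fin n × Fin n => ((ψ p.1 : ℤ) - ψ p.2).natAbs))
    rintro d ⟨x, y, -, rfl⟩
    exact ⟨(x, y), rfl⟩
  have hmono := Set.ncard_le_ncard hsub hDfin
  have hmono' : ({d : ℕ | ∃ x y, T'.Adj x y ∧ d = ((φ x : ℤ) - φ y).natAbs}.ncard : ℝ) ≤
      ({d : ℕ | ∃ x y, T.Adj x y ∧ d = ((ψ x : ℤ) - ψ y).natAbs}.ncard : ℝ) := by
    exact_mod_cast hmono
  have hchain : (1 - ε) * (n : ℝ) ≤ (1 - ε / 2) * (m : ℝ) := by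
    nlinarith [Nat.cast_nonneg (α := ℝ) n, hm_lb]
  calc (1 - ε) * (n : ℝ) ≤ (1 - ε / 2) * (m : ℝ) := hchain
    _ ≤ _ := le_trans hφcard hmono'
end
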